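/- arXiv:1504.05147 — 6 statements merged into one kernel-verified Lean document; each statement's English description precedes it below -/
import Mathlib

section
/- Let X be a finite random variable with distribution p(x), let r_x ∈ ℝ^n with ‖r_x‖ ≤ R, and let a measurement be given by effects e_y = γ_y (1, m_y) with γ_y ∈ [0,1], m_y ∈ ℝ^n, ‖m_y‖ ≤ M, satisfying ∑_y γ_y = 1 and ∑_y γ_y m_y = 0, and outcome probabilities p(y|x) = γ_y (1 + m_y · r_x) ≥ 0. Then the mutual information between X and the outcome Y satisfies I(X:Y) ≤ max_{x,y} log₂(1 + m_y · r_x) ≤ log₂(1 + M R). -/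
/-!
Write `p(y|x) = γ_y f(x,y)` with `f(x,y) = 1 + m_y · r_x`. Splitting
`log (p(y|x) / p(y)) = log f(x,y) + log (γ_y / p(y))`, the mutual information is the
`p(x,y)`-average of `log₂ f` minus the relative entropy `D(p_Y ‖ γ) ≥ 0`. An average is at most
the maximum, and by Cauchy–Schwarz `|m_y · r_x| ≤ M R`.
-/

open Real

/-- Mutual information (in bits) between input `X` with distribution `p` and the
measurement outcome `Y` with conditional distribution `q x y = p(y|x)`:
`I(X:Y) = ∑_{x,y} p(x) p(y|x) log₂( p(y|x) / p(y) )`, `p(y) = ∑_x p(x) p(y|x)`. -/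
noncomputable def mutInfo {X Y : Type*} [Fintype X] [Fintype Y]
    (p : X → ℝ) (q : X → Y → ℝ) : ℝ :=
  ∑ x, ∑ y, p x * q x y * Real.logb 2 (q x y / (∑ x', p x' * q x' y))

open Finset

theorem sum_mul_le_sup' {ι : Type*} [Fintype ι] [Nonempty ι] (w g : ι → ℝ)
    (hw : ∀ i, 0 ≤ w i) (hw1 : ∑ i, w i = 1) :
    ∑ i, w i * g i ≤ univ.sup' univ_nonempty g :=
  calc ∑ i, w i * g i ≤ ∑ i, w i * univ.sup' univ_nonempty g :=
        sum_le_sum fun i hi => mul_le_mul_of_nonneg_left (le_sup' g hi) (hw i)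
    _ = univ.sup' univ_nonempty g := by rw [← sum_mul, hw1, one_mul]

theorem abs_sum_mul_le_norm_mul_norm {ι : Type*} [Fintype ι] (u v : EuclideanSpace ℝ ι) :
    |∑ i, u i * v i| ≤ ‖u‖ * ‖v‖ := by
  have hinner : inner ℝ u v = ∑ i, u i * v i := by
    simp [PiLp.inner_apply, mul_comm]
  exact hinner ▸ abs_real_inner_le_norm u v

theorem Real.logb_one_add_le_logb_one_add {b s t : ℝ} (hb : 1 < b) (hst : |s| ≤ t) :
    logb b (1 + s) ≤ logb b (1 + t) := by
  rw [← logb_abs]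
  rcases eq_or_ne (1 + s) 0 with h | h
  · rw [h, abs_zero, logb_zero]
    exact logb_nonneg hb (by linarith [abs_nonneg s])
  · refine logb_le_logb_of_le hb (abs_pos.mpr h) ?_
    calc |1 + s| ≤ |1| + |s| := abs_add_le 1 s
      _ ≤ 1 + t := by rw [abs_one]; linarith

theorem Real.mul_log_div_le_sub {a t : ℝ} (ha : 0 ≤ a) (ht : 0 < t) : a * log (t / a) ≤ t - a := by
  rcases ha.eq_or_lt with rfl | ha
  · simpa using ht.le
  · calc a * log (t / a) ≤ a * (t / a - 1) :=
          mul_le_mul_of_nonneg_left (log_le_sub_one_of_pos (div_pos ht ha)) ha.le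
      _ = t - a := by field_simp

/-- Splitting `c / ∑ a = (c / t) * (t / ∑ a)`, the second factor contributes
`(∑ a) log (t / ∑ a) ≤ t - ∑ a` (Gibbs' inequality). -/
theorem Real.sum_mul_logb_div_sum_le {ι : Type*} [Fintype ι] {b : ℝ} (hb : 1 < b)
    (a c : ι → ℝ) (t : ℝ) (ha : ∀ i, 0 ≤ a i) (ht : 0 ≤ t)
    (hac : ∀ i, a i ≠ 0 → c i ≠ 0 ∧ t ≠ 0) :
    ∑ i, a i * logb b (c i / ∑ j, a j) ≤
      ∑ i, a i * logb b (c i / t) + (t - ∑ i, a i) / log b := by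
  have hlogb : 0 < log b := log_pos hb
  set P := ∑ j, a j with hP
  rcases (sum_nonneg fun i _ => ha i : 0 ≤ P).eq_or_lt with hP0 | hPpos
  · have hzero : ∀ i, a i = 0 := fun i =>
      (sum_eq_zero_iff_of_nonneg fun j _ => ha j).mp hP0.symm i (mem_univ i)
    simp only [hzero, zero_mul, sum_const_zero, zero_add]
    rw [show P = 0 from hP0.symm, sub_zero]
    exact div_nonneg ht hlogb.le
  obtain ⟨i₀, -, hi₀⟩ := exists_ne_zero_of_sum_ne_zero hPpos.ne'
  have htpos : 0 < t := ht.lt_of_ne (hac i₀ hi₀).2.symm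
  have hsplit : ∀ i, a i * logb b (c i / P) =
      a i * logb b (c i / t) + a i * logb b (t / P) := by
    intro i
    rcases eq_or_ne (a i) 0 with h | h
    · simp [h]
    · rw [← mul_add, ← logb_mul (div_ne_zero (hac i h).1 htpos.ne')
        (div_ne_zero htpos.ne' hPpos.ne'), div_mul_div_cancel₀ htpos.ne']
  rw [sum_congr rfl fun i _ => hsplit i, sum_add_distrib, ← sum_mul, ← hP]
  gcongr
  rw [logb, ← mul_div_assoc]
  exact div_le_div_of_nonneg_right (mul_log_div_le_sub hPpos.le htpos) hlogb.le

theorem mutInfo_le_sum_mul_logb_div {X Y : Type*} [Fintype X] [Fintype Y]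
    (p : X → ℝ) (q : X → Y → ℝ) (γ : Y → ℝ) (hp : ∀ x, 0 ≤ p x) (hq : ∀ x y, 0 ≤ q x y)
    (hγ : ∀ y, 0 ≤ γ y) (hγ1 : ∑ y, γ y ≤ 1) (hpq : ∑ x, ∑ y, p x * q x y = 1)
    (hqγ : ∀ x y, q x y ≠ 0 → γ y ≠ 0) :
    mutInfo p q ≤ ∑ x, ∑ y, p x * q x y * logb 2 (q x y / γ y) := by
  have hout : ∀ y, ∑ x, p x * q x y * logb 2 (q x y / ∑ x', p x' * q x' y) ≤
      ∑ x, p x * q x y * logb 2 (q x y / γ y) + (γ y - ∑ x, p x * q x y) / log 2 :=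
    fun y => sum_mul_logb_div_sum_le one_lt_two (fun x => p x * q x y) (fun x => q x y) (γ y)
      (fun x => mul_nonneg (hp x) (hq x y)) (hγ y)
      fun x h => ⟨right_ne_zero_of_mul h, hqγ x y (right_ne_zero_of_mul h)⟩
  have hdefect : (∑ y, (γ y - ∑ x, p x * q x y)) / log 2 ≤ 0 := by
    rw [sum_sub_distrib, sum_comm, hpq]
    exact div_nonpos_of_nonpos_of_nonneg (by linarith) (log_pos one_lt_two).le
  calc mutInfo p q = ∑ y, ∑ x, p x * q x y * logb 2 (q x y / ∑ x', p x' * q x' y) :=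
        sum_comm
    _ ≤ ∑ y, (∑ x, p x * q x y * logb 2 (q x y / γ y) + (γ y - ∑ x, p x * q x y) / log 2) :=
        sum_le_sum fun y _ => hout y
    _ ≤ ∑ x, ∑ y, p x * q x y * logb 2 (q x y / γ y) := by
        rw [sum_add_distrib, ← sum_div, sum_comm]
        linarith

theorem sum_mul_one_add_sum_mul_eq_one {ι Y : Type*} [Fintype ι] [Fintype Y]
    (γ : Y → ℝ) (m : Y → ι → ℝ) (v : ι → ℝ) (hγ1 : ∑ y, γ y = 1)
    (hγm : ∀ i, ∑ y, γ y * m y i = 0) :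
    ∑ y, γ y * (1 + ∑ i, m y i * v i) = 1 := by
  simp only [mul_add, mul_one, sum_add_distrib, hγ1, mul_sum, add_eq_left]
  rw [sum_comm]
  exact sum_eq_zero fun i _ => by simp only [← mul_assoc, ← sum_mul, hγm i, zero_mul]

/-- Proposition 1 (classical-capacity bound): for encodings `r_x` with `‖r_x‖ ≤ R`
and measurement effects `e_y = γ_y (1, m_y)` with `γ_y ∈ [0,1]`, `‖m_y‖ ≤ M`,
`∑ γ_y = 1`, `∑ γ_y m_y = 0`, and `p(y|x) = γ_y (1 + m_y·r_x) ≥ 0`, one has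
`I(X:Y) ≤ max_{x,y} log₂(1 + m_y·r_x) ≤ log₂(1 + M R)`. -/
theorem stmt5 (n : ℕ) {X Y : Type*} [Fintype X] [Fintype Y] [Nonempty X] [Nonempty Y]
    (p : X → ℝ) (r : X → EuclideanSpace ℝ (Fin n))
    (γ : Y → ℝ) (m : Y → EuclideanSpace ℝ (Fin n)) (M R : ℝ)
    (hp : ∀ x, 0 ≤ p x) (hp1 : ∑ x, p x = 1)
    (hγ : ∀ y, 0 ≤ γ y ∧ γ y ≤ 1)
    (hγ1 : ∑ y, γ y = 1)
    (hγm : ∀ i, ∑ y, γ y * m y i = 0)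
    (hR : ∀ x, ‖r x‖ ≤ R) (hM : ∀ y, ‖m y‖ ≤ M)
    (hpos : ∀ x y, 0 ≤ γ y * (1 + ∑ i, m y i * r x i)) :
    mutInfo p (fun x y => γ y * (1 + ∑ i, m y i * r x i)) ≤
      (Finset.univ : Finset (X × Y)).sup' Finset.univ_nonempty
        (fun z => Real.logb 2 (1 + ∑ i, m z.2 i * r z.1 i)) ∧
    (Finset.univ : Finset (X × Y)).sup' Finset.univ_nonempty
        (fun z => Real.logb 2 (1 + ∑ i, m z.2 i * r z.1 i)) ≤
      Real.logb 2 (1 + M * R) := by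
  set q : X → Y → ℝ := fun x y => γ y * (1 + ∑ i, m y i * r x i)
  have hjoint : ∑ x, ∑ y, p x * q x y = 1 := by
    simp only [← mul_sum, q, sum_mul_one_add_sum_mul_eq_one γ _ _ hγ1 hγm, mul_one, hp1]
  have hqγ : ∀ x y, q x y ≠ 0 → γ y ≠ 0 := fun x y => left_ne_zero_of_mul
  have hcancel : ∀ x y, p x * q x y * logb 2 (q x y / γ y) =
      p x * q x y * logb 2 (1 + ∑ i, m y i * r x i) := by
    intro x y
    rcases eq_or_ne (q x y) 0 with h | h
    · simp [h]
    · rw [mul_div_cancel_left₀ _ (hqγ x y h)]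
  refine ⟨?_, sup'_le _ _ fun z _ => logb_one_add_le_logb_one_add one_lt_two ?_⟩
  · calc mutInfo p q ≤ ∑ x, ∑ y, p x * q x y * logb 2 (q x y / γ y) :=
          mutInfo_le_sum_mul_logb_div p q γ hp hpos (fun y => (hγ y).1) hγ1.le hjoint hqγ
      _ = ∑ z : X × Y, p z.1 * q z.1 z.2 * logb 2 (1 + ∑ i, m z.2 i * r z.1 i) := by
          simp only [hcancel, Fintype.sum_prod_type]
      _ ≤ _ := sum_mul_le_sup' _ _ (fun z => mul_nonneg (hp z.1) (hpos z.1 z.2))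
          (by rwa [Fintype.sum_prod_type])
  · calc |∑ i, m z.2 i * r z.1 i| ≤ ‖m z.2‖ * ‖r z.1‖ := abs_sum_mul_le_norm_mul_norm _ _
      _ ≤ M * R := mul_le_mul (hM _) (hR _) (norm_nonneg _) ((norm_nonneg _).trans (hM z.2))
end

section
/- The classical capacity of a hypersphere theory of any dimension n is exactly 1 bit: there exists an encoding into states of the n-ball and a two-outcome measurement achieving mutual information 1, and no encoding/measurement achieves more than 1 bit. -/
open Real Finset
open scoped RealInnerProductSpace

lemma mul_logb_div_le {a b : ℝ} (ha : 0 ≤ a) (hb : 0 ≤ b) (hab : 0 < b → 0 < a) :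
    b * logb 2 (a / b) ≤ (a - b) / log 2 := by
  rcases hb.eq_or_lt with rfl | hb
  · simpa using div_nonneg ha (log_nonneg one_le_two)
  have hlog : b * log (a / b) ≤ a - b := by
    calc b * log (a / b) ≤ b * (a / b - 1) :=
          mul_le_mul_of_nonneg_left (log_le_sub_one_of_pos (div_pos (hab hb) hb)) hb.le
      _ = a - b := by field_simp
  rw [logb, ← mul_div_assoc]
  exact div_le_div_of_nonneg_right hlog (log_nonneg one_le_two)

lemma sum_mul_logb_div_nonpos {Y : Type*} [Fintype Y] {a b : Y → ℝ} (ha : ∀ y, 0 ≤ a y)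
    (hb : ∀ y, 0 ≤ b y) (hab : ∀ y, 0 < b y → 0 < a y) (hsum : ∑ y, a y ≤ ∑ y, b y) :
    ∑ y, b y * logb 2 (a y / b y) ≤ 0 := by
  calc ∑ y, b y * logb 2 (a y / b y) ≤ ∑ y, (a y - b y) / log 2 :=
        sum_le_sum fun y _ ↦ mul_logb_div_le (ha y) (hb y) (hab y)
    _ ≤ 0 := by
        rw [← sum_div, sum_sub_distrib]
        exact div_nonpos_of_nonpos_of_nonneg (by linarith) (log_nonneg one_le_two)

lemma mutInfo_le_logb_of_le_mul {X Y : Type*} [Fintype X] [Fintype Y] {p : X → ℝ}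
    {q : X → Y → ℝ} {γ : Y → ℝ} {c : ℝ} (hc : 0 < c) (hp : ∀ x, 0 ≤ p x)
    (hp1 : ∑ x, p x = 1) (hq : ∀ x y, 0 ≤ q x y) (hq1 : ∀ x, ∑ y, q x y = 1)
    (hγ : ∀ y, 0 ≤ γ y) (hγ1 : ∑ y, γ y = 1) (hqγ : ∀ x y, q x y ≤ c * γ y) :
    mutInfo p q ≤ logb 2 c := by
  set qb : Y → ℝ := fun y ↦ ∑ x, p x * q x y with hqb
  have hpq : ∀ x y, 0 ≤ p x * q x y := fun x y ↦ mul_nonneg (hp x) (hq x y)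
  have hqb_le : ∀ y, qb y ≤ c * γ y := fun y ↦
    calc qb y ≤ ∑ x, p x * (c * γ y) :=
          sum_le_sum fun x _ ↦ mul_le_mul_of_nonneg_left (hqγ x y) (hp x)
      _ = c * γ y := by rw [← sum_mul, hp1, one_mul]
  have hqb_sum : ∑ y, qb y = 1 := by
    simp only [hqb]
    rw [sum_comm]
    simp only [← mul_sum, hq1, mul_one, hp1]
  have hterm : ∀ x y, p x * q x y * logb 2 (q x y / qb y)
      ≤ p x * q x y * (logb 2 c + logb 2 (γ y / qb y)) := by
    intro x y
    rcases (hpq x y).eq_or_lt with h0 | hpos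
    · simp [← h0]
    have hq_pos : 0 < q x y := pos_of_mul_pos_right hpos (hp x)
    have hqb_pos : 0 < qb y := hpos.trans_le (single_le_sum (fun x _ ↦ hpq x y) (mem_univ x))
    have hγ_pos : 0 < γ y := pos_of_mul_pos_right (hq_pos.trans_le (hqγ x y)) hc.le
    rw [← logb_mul hc.ne' (div_pos hγ_pos hqb_pos).ne', ← mul_div_assoc]
    gcongr
    · exact one_lt_two
    · exact hqγ x y
  calc mutInfo p q ≤ ∑ x, ∑ y, p x * q x y * (logb 2 c + logb 2 (γ y / qb y)) :=
        sum_le_sum fun x _ ↦ sum_le_sum fun y _ ↦ hterm x y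
    _ = ∑ y, qb y * (logb 2 c + logb 2 (γ y / qb y)) := by
        rw [sum_comm]
        simp only [hqb, sum_mul]
    _ = logb 2 c + ∑ y, qb y * logb 2 (γ y / qb y) := by
        simp only [mul_add, sum_add_distrib]
        rw [← sum_mul, hqb_sum, one_mul]
    _ ≤ logb 2 c := by
        have := sum_mul_logb_div_nonpos hγ (fun y ↦ sum_nonneg fun x _ ↦ hpq x y)
          (fun y h ↦ pos_of_mul_pos_right (h.trans_le (hqb_le y)) hc.le) (by rw [hγ1, hqb_sum])
        linarith

lemma mutInfo_id {X : Type*} [Fintype X] [DecidableEq X] (p : X → ℝ) :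
    mutInfo p (fun x y ↦ if x = y then 1 else 0) = -∑ x, p x * logb 2 (p x) := by
  simp [mutInfo, ← sum_neg_distrib]

section Hypersphere

variable {ι : Type*} [Fintype ι]

lemma sum_mul_eq_inner (m r : EuclideanSpace ℝ ι) : ∑ i, m i * r i = ⟪m, r⟫ := by
  simp [PiLp.inner_apply, mul_comm]

lemma hypersphere_response_mem_Icc {γ : ℝ} {m r : EuclideanSpace ℝ ι} (hγ : 0 ≤ γ)
    (hm : ‖m‖ ≤ 1) (hr : ‖r‖ ≤ 1) : γ * (1 + ∑ i, m i * r i) ∈ Set.Icc 0 (2 * γ) := by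
  have hmr : |⟪m, r⟫| ≤ 1 :=
    (abs_real_inner_le_norm m r).trans (mul_le_one₀ hm (norm_nonneg r) hr)
  rw [sum_mul_eq_inner]
  obtain ⟨h₁, h₂⟩ := abs_le.1 hmr
  constructor <;> nlinarith

lemma sum_hypersphere_response {Y : Type*} [Fintype Y] {γ : Y → ℝ}
    {m : Y → EuclideanSpace ℝ ι} (hγ1 : ∑ y, γ y = 1) (hm0 : ∀ i, ∑ y, γ y * m y i = 0)
    (r : EuclideanSpace ℝ ι) : ∑ y, γ y * (1 + ∑ i, m y i * r i) = 1 := by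
  simp only [mul_add, mul_one, sum_add_distrib, hγ1, mul_sum, ← mul_assoc]
  rw [sum_comm]
  simp [← sum_mul, hm0]

theorem mutInfo_hypersphere_le_one {X Y : Type*} [Fintype X] [Fintype Y] (p : X → ℝ)
    (r : X → EuclideanSpace ℝ ι) (γ : Y → ℝ) (m : Y → EuclideanSpace ℝ ι)
    (hp : ∀ x, 0 ≤ p x) (hp1 : ∑ x, p x = 1) (hr : ∀ x, ‖r x‖ ≤ 1)
    (hγ : ∀ y, 0 ≤ γ y) (hγ1 : ∑ y, γ y = 1)
    (hm0 : ∀ i, ∑ y, γ y * m y i = 0) (hm : ∀ y, ‖m y‖ ≤ 1) :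
    mutInfo p (fun x y ↦ γ y * (1 + ∑ i, m y i * r x i)) ≤ 1 := by
  have hq := fun x y ↦ hypersphere_response_mem_Icc (hγ y) (hm y) (hr x)
  simpa using mutInfo_le_logb_of_le_mul two_pos hp hp1 (fun x y ↦ (hq x y).1)
    (fun x ↦ sum_hypersphere_response hγ1 hm0 (r x)) hγ hγ1 (fun x y ↦ (hq x y).2)

lemma antipodal_response {v : EuclideanSpace ℝ ι} (hv : ‖v‖ = 1) (x y : Fin 2) :
    1 / 2 * (1 + ∑ i, ![v, -v] y i * ![v, -v] x i) = if x = y then 1 else 0 := by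
  rw [sum_mul_eq_inner]
  fin_cases x <;> fin_cases y <;> simp [hv] <;> norm_num

theorem exists_hypersphere_mutInfo_eq_one [Nonempty ι] :
    ∃ (p : Fin 2 → ℝ) (r : Fin 2 → EuclideanSpace ℝ ι)
      (γ : Fin 2 → ℝ) (m : Fin 2 → EuclideanSpace ℝ ι),
      (∀ x, 0 ≤ p x) ∧ (∑ x, p x = 1) ∧
      (∀ x, ‖r x‖ ≤ 1) ∧
      (∀ y, 0 ≤ γ y ∧ γ y ≤ 1) ∧ (∑ y, γ y = 1) ∧
      (∀ i, ∑ y, γ y * m y i = 0) ∧ (∀ y, ‖m y‖ ≤ 1) ∧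
      mutInfo p (fun x y => γ y * (1 + ∑ i, m y i * r x i)) = 1 := by
  obtain ⟨v, hv⟩ := exists_norm_eq (EuclideanSpace ℝ ι) zero_le_one
  have hnorm : ∀ x : Fin 2, ‖![v, -v] x‖ ≤ 1 := by
    intro x; fin_cases x <;> simp [hv]
  refine ⟨fun _ ↦ 1 / 2, ![v, -v], fun _ ↦ 1 / 2, ![v, -v], fun _ ↦ by norm_num, by norm_num,
    hnorm, fun _ ↦ by norm_num, by norm_num, fun i ↦ by simp, hnorm, ?_⟩
  simp only [antipodal_response hv, mutInfo_id]
  simp [logb_self_eq_one]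

end Hypersphere

/-- The classical capacity of a hypersphere theory of dimension `n ≥ 1` is exactly `1` bit:
(i) every encoding `x ↦ ω_{r_x}` (states `(1,r)`, `‖r‖ ≤ 1`) and measurement
`{e_y = γ_y(1,m_y)}` (with `γ_y ∈ [0,1]`, `‖m_y‖ ≤ 1`, `∑ γ_y = 1`, `∑ γ_y m_y = 0`)
gives `I(X:Y) ≤ 1`; (ii) some encoding and two-outcome measurement achieve `I(X:Y) = 1`. -/
theorem stmt7 (n : ℕ) (hn : 1 ≤ n) :
    (∀ (X Y : Type) (_ : Fintype X) (_ : Fintype Y)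
      (p : X → ℝ) (r : X → EuclideanSpace ℝ (Fin n))
      (γ : Y → ℝ) (m : Y → EuclideanSpace ℝ (Fin n)),
      (∀ x, 0 ≤ p x) → (∑ x, p x = 1) →
      (∀ x, ‖r x‖ ≤ 1) →
      (∀ y, 0 ≤ γ y ∧ γ y ≤ 1) → (∑ y, γ y = 1) →
      (∀ i, ∑ y, γ y * m y i = 0) → (∀ y, ‖m y‖ ≤ 1) →
      mutInfo p (fun x y => γ y * (1 + ∑ i, m y i * r x i)) ≤ 1) ∧
    (∃ (p : Fin 2 → ℝ) (r : Fin 2 → EuclideanSpace ℝ (Fin n))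
      (γ : Fin 2 → ℝ) (m : Fin 2 → EuclideanSpace ℝ (Fin n)),
      (∀ x, 0 ≤ p x) ∧ (∑ x, p x = 1) ∧
      (∀ x, ‖r x‖ ≤ 1) ∧
      (∀ y, 0 ≤ γ y ∧ γ y ≤ 1) ∧ (∑ y, γ y = 1) ∧
      (∀ i, ∑ y, γ y * m y i = 0) ∧ (∀ y, ‖m y‖ ≤ 1) ∧
      mutInfo p (fun x y => γ y * (1 + ∑ i, m y i * r x i)) = 1) := by
  refine ⟨fun X Y _ _ p r γ m hp hp1 hr hγ hγ1 hm0 hm ↦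
    mutInfo_hypersphere_le_one p r γ m hp hp1 hr (fun y ↦ (hγ y).1) hγ1 hm0 hm, ?_⟩
  have : Nonempty (Fin n) := ⟨⟨0, hn⟩⟩
  exact exists_hypersphere_mutInfo_eq_one
end

section
/- For any μ ∈ {0,1}^N and any unit vectors α, β ∈ ℝ^{2^N − 1}, the product effect e_α ⊗ e_β with e_α = (1/2)(1,α), e_β = (1/2)(1,β) applied to the entangled state φ_μ = diag(d_μ) satisfies (e_α ⊗ e_β) · φ_μ = (1/4)(1 + α · T̂_μ β), hence 0 ≤ (e_α ⊗ e_β) · φ_μ ≤ 1/2. In particular φ_μ lies in the maximal tensor product of two hypersphere systems of dimension 2^N − 1. -/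
/-! The pairing with the diagonal state `φ_μ` only sees the diagonal, so it splits into the
`0`-th entry `1/4` and the weighted inner product `(1/4) α · T̂_μ β`; since the weights are
signs, `T̂_μ β` is again a unit vector and Cauchy–Schwarz puts that inner product in `[-1, 1]`. -/

noncomputable def dVec (N : ℕ) (μ ν : Fin N → ZMod 2) : ℝ :=
  (-1 : ℝ) ^ (∑ l, μ l * ν l : ZMod 2).val

noncomputable def phiMat (N : ℕ) (μ : Fin N → ZMod 2) :
    Matrix (Fin N → ZMod 2) (Fin N → ZMod 2) ℝ :=
  Matrix.diagonal (dVec N μ)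

open Finset

lemma dVec_sq (N : ℕ) (μ ν : Fin N → ZMod 2) : dVec N μ ν ^ 2 = 1 := by
  rw [dVec, ← pow_mul, mul_comm, pow_mul, neg_one_sq, one_pow]

lemma dVec_zero (N : ℕ) (μ : Fin N → ZMod 2) : dVec N μ 0 = 1 := by
  simp [dVec]

lemma sum_sq_dVec_mul (N : ℕ) (μ : Fin N → ZMod 2) (β : (Fin N → ZMod 2) → ℝ) :
    ∑ ν, (dVec N μ ν * β ν) ^ 2 = ∑ ν, β ν ^ 2 := by
  simp only [mul_pow, dVec_sq, one_mul]

lemma sum_sum_mul_diagonal_mul {ι R : Type*} [Fintype ι] [DecidableEq ι] [CommSemiring R]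
    (x y d : ι → R) :
    ∑ j, ∑ k, x j * Matrix.diagonal d j k * y k = ∑ j, x j * d j * y j := by
  simp [Matrix.diagonal_apply, mul_ite, ite_mul]

lemma sum_ite_mul_mul_ite {ι R : Type*} [Fintype ι] [DecidableEq ι] [CommSemiring R]
    (i : ι) (a b : R) (f g w : ι → R) (hf : f i = 0) :
    ∑ j, (if j = i then a else f j) * w j * (if j = i then b else g j) =
      a * w i * b + ∑ j, f j * w j * g j := by
  rw [← add_sum_erase _ _ (mem_univ i), ← add_sum_erase _ _ (mem_univ i), hf,
    zero_mul, zero_mul, zero_add, if_pos rfl, if_pos rfl]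
  congr 1
  refine sum_congr rfl fun j hj => ?_
  rw [if_neg (ne_of_mem_erase hj), if_neg (ne_of_mem_erase hj)]

lemma abs_sum_mul_le_one {ι : Type*} [Fintype ι] (f g : ι → ℝ)
    (hf : ∑ i, f i ^ 2 = 1) (hg : ∑ i, g i ^ 2 = 1) : |∑ i, f i * g i| ≤ 1 := by
  rw [← sq_le_one_iff_abs_le_one]
  simpa [hf, hg] using sum_mul_sq_le_sq_mul_sq univ f g

theorem stmt9_general (N : ℕ) (μ : Fin N → ZMod 2) (α β : (Fin N → ZMod 2) → ℝ)
    (hα0 : α 0 = 0)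
    (hα : ∑ ν, (α ν) ^ 2 = 1) (hβ : ∑ ν, (β ν) ^ 2 = 1) :
    (∑ j, ∑ k, (if j = 0 then (1 : ℝ) / 2 else α j / 2) * phiMat N μ j k *
        (if k = 0 then (1 : ℝ) / 2 else β k / 2)) =
      (1 / 4) * (1 + ∑ ν, α ν * (dVec N μ ν * β ν)) ∧
    0 ≤ (1 / 4) * (1 + ∑ ν, α ν * (dVec N μ ν * β ν)) ∧
    (1 / 4) * (1 + ∑ ν, α ν * (dVec N μ ν * β ν)) ≤ 1 / 2 ∧
    (∑ j, ∑ k, (if j = 0 then (1 : ℝ) else 0) * phiMat N μ j k *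
        (if k = 0 then (1 : ℝ) else 0)) = 1 := by
  have hS := abs_le.mp <| abs_sum_mul_le_one α (fun ν => dVec N μ ν * β ν) hα
    ((sum_sq_dVec_mul N μ β).trans hβ)
  refine ⟨?_, by linarith, by linarith, ?_⟩
  · rw [phiMat, sum_sum_mul_diagonal_mul,
      sum_ite_mul_mul_ite 0 _ _ (fun j => α j / 2) _ _ (by simp [hα0]), dVec_zero,
      mul_add, mul_sum]
    congr 1
    · norm_num
    · exact sum_congr rfl fun ν _ => by ring
  · rw [phiMat, sum_sum_mul_diagonal_mul]
    simp [dVec_zero]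

/-- Product effects on the entangled states `φ_μ`: for unit vectors `α, β ∈ ℝ^{2^N−1}`
(encoded as vectors on `{0,1}^N` vanishing at the index `0`, with `e_α = (1/2)(1,α)`),
`(e_α ⊗ e_β) · φ_μ = (1/4)(1 + α · T̂_μ β)` lies in `[0, 1/2]`; moreover
`(u ⊗ u) · φ_μ = 1`, so `φ_μ` lies in the maximal tensor product. -/
theorem stmt9 (N : ℕ) (μ : Fin N → ZMod 2) (α β : (Fin N → ZMod 2) → ℝ)
    (hα0 : α 0 = 0) (hβ0 : β 0 = 0)
    (hα : ∑ ν, (α ν) ^ 2 = 1) (hβ : ∑ ν, (β ν) ^ 2 = 1) :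
    (∑ j, ∑ k, (if j = 0 then (1 : ℝ) / 2 else α j / 2) * phiMat N μ j k *
        (if k = 0 then (1 : ℝ) / 2 else β k / 2)) =
      (1 / 4) * (1 + ∑ ν, α ν * (dVec N μ ν * β ν)) ∧
    0 ≤ (1 / 4) * (1 + ∑ ν, α ν * (dVec N μ ν * β ν)) ∧
    (1 / 4) * (1 + ∑ ν, α ν * (dVec N μ ν * β ν)) ≤ 1 / 2 ∧
    (∑ j, ∑ k, (if j = 0 then (1 : ℝ) else 0) * phiMat N μ j k *
        (if k = 0 then (1 : ℝ) else 0)) = 1 :=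
  stmt9_general N μ α β hα0 hα hβ
end

section
/- In the hyperdense coding protocol: starting from φ_0 = I (identity matrix in ℝ^{2^N}⊗ℝ^{2^N}), applying the local transformation T_x = diag(d_x) gives T_x φ_0 = φ_x, and measuring with {E_y = 2^{-N} φ_y} yields p(y|x) = δ_{y,x}. Consequently, for a uniform distribution over x ∈ {0,1}^N, the mutual information I(X:Y) = N. -/
open Matrix

/-!
The vectors `d_x` are the Walsh characters `ν ↦ (-1)^(x ⬝ᵥ ν)` of `(ZMod 2)^N`. Products of
characters are characters and a nontrivial character sums to zero, so the `d_x` are orthogonal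
with squared norm `2^N`; this makes `E_y · φ_x = δ_{y,x}`. Through a noiseless channel the mutual
information is the entropy of the source, which is `N` bits for the uniform source on `2^N`
messages.
-/

namespace ZMod

noncomputable def signChar : AddChar (ZMod 2) ℝ :=
  AddChar.zmodChar 2 (by norm_num : (-1 : ℝ) ^ 2 = 1)

lemma signChar_apply (a : ZMod 2) : signChar a = (-1) ^ a.val := rfl

lemma signChar_one : signChar 1 = -1 := by
  rw [signChar_apply, ZMod.val_one, pow_one]

noncomputable def walshChar {ι : Type*} [Fintype ι] (c : ι → ZMod 2) :
    AddChar (ι → ZMod 2) ℝ :=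
  signChar.compAddMonoidHom (AddMonoidHom.mk' (c ⬝ᵥ ·) (dotProduct_add c))

variable {ι : Type*} [Fintype ι]

lemma walshChar_apply (c ν : ι → ZMod 2) : walshChar c ν = signChar (c ⬝ᵥ ν) := rfl

lemma walshChar_add_apply (a b ν : ι → ZMod 2) :
    walshChar (a + b) ν = walshChar a ν * walshChar b ν := by
  simp only [walshChar_apply, add_dotProduct, AddChar.map_add_eq_mul]

lemma walshChar_eq_zero_iff [DecidableEq ι] {c : ι → ZMod 2} : walshChar c = 0 ↔ c = 0 := by
  refine ⟨fun h => ?_, fun h => by subst h; ext; simp [walshChar_apply]⟩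
  funext l
  have hl := DFunLike.congr_fun h (Pi.single l 1)
  rw [walshChar_apply, dotProduct_single, mul_one, AddChar.zero_apply] at hl
  rcases (by decide : ∀ a : ZMod 2, a = 0 ∨ a = 1) (c l) with h0 | h1
  · exact h0
  · rw [h1, signChar_one] at hl
    norm_num at hl

lemma sum_walshChar [DecidableEq ι] (c : ι → ZMod 2) :
    ∑ ν, walshChar c ν = if c = 0 then (2 : ℝ) ^ Fintype.card ι else 0 := by
  simp only [AddChar.sum_eq_ite, walshChar_eq_zero_iff, Fintype.card_pi, ZMod.card,
    Finset.prod_const, Finset.card_univ, Nat.cast_pow, Nat.cast_ofNat]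

end ZMod

open ZMod

lemma dVec_eq_walshChar (N : ℕ) (μ : Fin N → ZMod 2) : dVec N μ = walshChar μ := rfl

lemma sum_dVec_mul_dVec (N : ℕ) (x y : Fin N → ZMod 2) :
    ∑ ν, dVec N y ν * dVec N x ν = if y = x then (2 : ℝ) ^ N else 0 := by
  have hneg : y + x = y - x := by
    rw [sub_eq_add_neg]
    congr 1
    funext l
    exact (ZMod.neg_eq_self_mod_two (x l)).symm
  simp only [dVec_eq_walshChar, ← walshChar_add_apply, sum_walshChar, Fintype.card_fin, hneg,
    sub_eq_zero]

lemma trace_transpose_phiMat_mul_phiMat (N : ℕ) (x y : Fin N → ZMod 2) :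
    trace ((phiMat N y)ᵀ * phiMat N x) = if y = x then (2 : ℝ) ^ N else 0 := by
  rw [phiMat, phiMat, diagonal_transpose, diagonal_mul_diagonal, trace_diagonal,
    sum_dVec_mul_dVec]

lemma mutInfo_ite_eq_neg_sum_mul_logb {X : Type*} [Fintype X] [DecidableEq X] (p : X → ℝ) :
    mutInfo p (fun x y => if y = x then (1 : ℝ) else 0) = -∑ x, p x * Real.logb 2 (p x) := by
  simp only [mutInfo, mul_ite, mul_one, mul_zero, ite_mul, zero_mul, Finset.sum_ite_eq',
    Finset.sum_ite_eq, Finset.mem_univ, if_true, one_div, Real.logb_inv, mul_neg,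
    Finset.sum_neg_distrib]

lemma mutInfo_uniform_ite_eq_logb_card (X : Type*) [Fintype X] [DecidableEq X] :
    mutInfo (fun _ : X => (Fintype.card X : ℝ)⁻¹) (fun x y => if y = x then (1 : ℝ) else 0) =
      Real.logb 2 (Fintype.card X) := by
  rcases isEmpty_or_nonempty X with _ | _
  · simp [mutInfo]
  rw [mutInfo_ite_eq_neg_sum_mul_logb, Finset.sum_const, Finset.card_univ, nsmul_eq_mul,
    Real.logb_inv, ← mul_assoc, mul_inv_cancel₀ (by positivity), one_mul, neg_neg]

/-- Hyperdense coding protocol: applying `T_x = diag(d_x)` to `φ_0 = I` gives `φ_x`,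
measuring with `E_y = 2^{-N} φ_y` yields `p(y|x) = δ_{y,x}`, and for a uniform input
distribution over `{0,1}^N` the mutual information equals `N` bits. -/
theorem stmt10 (N : ℕ) :
    (∀ x : Fin N → ZMod 2, phiMat N x * (1 : Matrix _ _ ℝ) = phiMat N x) ∧
    (∀ x y : Fin N → ZMod 2,
      Matrix.trace ((((2 : ℝ) ^ N)⁻¹ • phiMat N y)ᵀ *
        (phiMat N x * (1 : Matrix _ _ ℝ))) = if y = x then 1 else 0) ∧
    mutInfo (fun _ : Fin N → ZMod 2 => ((2 : ℝ) ^ N)⁻¹)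
      (fun x y => if y = x then (1 : ℝ) else 0) = N := by
  refine ⟨fun x => mul_one _, fun x y => ?_, ?_⟩
  · rw [mul_one, transpose_smul, smul_mul, trace_smul, trace_transpose_phiMat_mul_phiMat,
      smul_eq_mul, mul_ite, inv_mul_cancel₀ (by positivity), mul_zero]
  · have hcard : ((2 : ℝ) ^ N) = Fintype.card (Fin N → ZMod 2) := by simp
    rw [hcard, mutInfo_uniform_ite_eq_logb_card, ← hcard, Real.logb_pow,
      Real.logb_self_eq_one one_lt_two, mul_one]
end

section
/- Suppose for a bipartite hypersphere theory with local dimension n that for all orthogonal matrices T̂, T̂' in the allowed group 𝒯̂ one has 1 + α·(T̂a) + β·(T̂'b) + Γ·(T̂ C T̂'ᵗ) ≥ 0. If a = 0 and 𝒯̂ = SO(n) with n odd, then χ := β·b + Γ·C satisfies χ ≤ 1/(1 − 2/n) ≤ 3, with the second inequality an equality only when n = 3. -/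
/-!
Test the hypothesis with `T̂ = 1` and `T̂' = Q_k`, the diagonal sign matrix with `+1` at `k` and
`-1` elsewhere, which lies in `SO(n)` because `n` is odd. Writing `x_k = β_k b_k + (ΓᵀC)_kk`, so
that `χ = ∑ x_k`, this gives `0 ≤ 1 + 2 x_k - χ` for every `k`; summing over `k` yields
`(n - 2) χ ≤ n`.
-/

open Matrix

theorem Finset.sum_ite_eq_neg {ι R : Type*} [Fintype ι] [DecidableEq ι] [CommRing R]
    (k : ι) (x : ι → R) :
    ∑ j, (if j = k then x j else -x j) = 2 * x k - ∑ j, x j := by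
  have hsplit : ∀ j, (if j = k then x j else -x j) = 2 * (if j = k then x j else 0) - x j := by
    intro j
    split_ifs <;> ring
  simp only [hsplit, Finset.sum_sub_distrib, ← Finset.mul_sum, Finset.sum_ite_eq', Finset.mem_univ,
    if_true]

theorem mul_sum_le_of_forall_nonneg_one_add_two_mul_sub_sum {ι K : Type*} [Fintype ι]
    [Field K] [LinearOrder K] [IsStrictOrderedRing K] {x : ι → K}
    (h : ∀ k, 0 ≤ 1 + 2 * x k - ∑ j, x j) :
    ((Fintype.card ι : K) - 2) * ∑ j, x j ≤ Fintype.card ι := by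
  have hsum := Finset.sum_nonneg fun k (_ : k ∈ Finset.univ) => h k
  simp only [Finset.sum_sub_distrib, Finset.sum_add_distrib, ← Finset.mul_sum, Finset.sum_const,
    Finset.card_univ, nsmul_eq_mul, mul_one] at hsum
  linarith

namespace Matrix

variable {ι R : Type*} [DecidableEq ι] [CommRing R]

def signFlipExcept (k : ι) : Matrix ι ι R :=
  diagonal fun j => if j = k then 1 else -1

theorem transpose_signFlipExcept (k : ι) :
    (signFlipExcept k : Matrix ι ι R)ᵀ = signFlipExcept k :=
  diagonal_transpose _

variable [Fintype ι]

theorem signFlipExcept_mul_self (k : ι) :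
    (signFlipExcept k : Matrix ι ι R) * signFlipExcept k = 1 := by
  rw [signFlipExcept, diagonal_mul_diagonal, ← diagonal_one]
  congr 1
  ext j
  split_ifs <;> simp

theorem det_signFlipExcept (hodd : Odd (Fintype.card ι)) (k : ι) :
    (signFlipExcept k : Matrix ι ι R).det = 1 := by
  rw [signFlipExcept, det_diagonal, Finset.prod_ite, Finset.prod_const_one, one_mul,
    Finset.prod_const, Finset.filter_ne', Finset.card_erase_of_mem (Finset.mem_univ k),
    Finset.card_univ]
  exact (Nat.Odd.sub_odd hodd odd_one).neg_one_pow

theorem dotProduct_signFlipExcept_mulVec (k : ι) (v w : ι → R) :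
    v ⬝ᵥ (signFlipExcept k *ᵥ w) = 2 * (v k * w k) - v ⬝ᵥ w := by
  simp only [signFlipExcept, mulVec_diagonal, dotProduct, ite_mul, one_mul, neg_one_mul, mul_ite,
    mul_neg]
  exact Finset.sum_ite_eq_neg k _

theorem trace_mul_signFlipExcept (k : ι) (M : Matrix ι ι R) :
    trace (M * signFlipExcept k) = 2 * M k k - trace M := by
  simp only [signFlipExcept, trace, diag, mul_diagonal, mul_ite, mul_one, mul_neg]
  exact Finset.sum_ite_eq_neg k _

end Matrix

theorem inv_one_sub_two_div_eq {x : ℝ} (hx : x ≠ 0) : (1 - 2 / x)⁻¹ = x / (x - 2) := by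
  rw [one_sub_div hx, inv_div]

theorem inv_one_sub_two_div_le_three {x : ℝ} (hx : 3 ≤ x) : (1 - 2 / x)⁻¹ ≤ 3 := by
  rw [inv_one_sub_two_div_eq (by positivity), div_le_iff₀ (by linarith)]
  linarith

theorem eq_three_of_inv_one_sub_two_div_eq_three {x : ℝ} (h : (1 - 2 / x)⁻¹ = 3) : x = 3 := by
  have hx : x ≠ 0 := by
    rintro rfl
    norm_num at h
  rw [inv_eq_iff_eq_inv] at h
  field_simp at h
  linarith

/-- For a bipartite hypersphere state/effect pair with `a = 0` and allowed local
transformation group `SO(n)` with `n` odd: if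
`1 + α·(T̂a) + β·(T̂'b) + Γ·(T̂ C T̂'ᵗ) ≥ 0` for all `T̂, T̂' ∈ SO(n)`, then
`χ = β·b + Γ·C` satisfies `χ ≤ 1/(1 − 2/n) ≤ 3`, with the second inequality an
equality only when `n = 3`. -/
theorem stmt16 (n : ℕ) (hn : 2 ≤ n) (hodd : Odd n)
    (a b α β : Fin n → ℝ) (C Γ : Matrix (Fin n) (Fin n) ℝ)
    (ha : a = 0)
    (h : ∀ T T' : Matrix (Fin n) (Fin n) ℝ,
      Tᵀ * T = 1 → T.det = 1 → T'ᵀ * T' = 1 → T'.det = 1 →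
      0 ≤ 1 + (∑ i, α i * (T *ᵥ a) i) + (∑ j, β j * (T' *ᵥ b) j) +
        Matrix.trace (Γᵀ * (T * C * T'ᵀ))) :
    (∑ j, β j * b j) + Matrix.trace (Γᵀ * C) ≤ (1 - 2 / (n : ℝ))⁻¹ ∧
    (1 - 2 / (n : ℝ))⁻¹ ≤ 3 ∧
    ((1 - 2 / (n : ℝ))⁻¹ = 3 → n = 3) := by
  have hn3 : (3 : ℝ) ≤ n := by
    obtain ⟨m, rfl⟩ := hodd
    norm_cast
    omega
  have key : ∀ k, 0 ≤ 1 + 2 * (β k * b k + (Γᵀ * C) k k) - ∑ j, (β j * b j + (Γᵀ * C) j j) := by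
    intro k
    have hk := h 1 (signFlipExcept k) (by simp) det_one
      (by rw [transpose_signFlipExcept, signFlipExcept_mul_self])
      (det_signFlipExcept (by simpa using hodd) k)
    have hβ : ∑ j, β j * (signFlipExcept k *ᵥ b) j = 2 * (β k * b k) - ∑ j, β j * b j :=
      dotProduct_signFlipExcept_mulVec k β b
    rw [ha, hβ, transpose_signFlipExcept, one_mul, ← Matrix.mul_assoc,
      trace_mul_signFlipExcept] at hk
    simp only [mulVec_zero, Pi.zero_apply, mul_zero, Finset.sum_const_zero, add_zero] at hk
    have htrace : ∑ j, (Γᵀ * C) j j = trace (Γᵀ * C) := rfl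
    rw [Finset.sum_add_distrib, htrace]
    linarith
  have hχ := mul_sum_le_of_forall_nonneg_one_add_two_mul_sub_sum key
  rw [Fintype.card_fin, Finset.sum_add_distrib] at hχ
  refine ⟨?_, inv_one_sub_two_div_le_three hn3, fun h3 => ?_⟩
  · rw [inv_one_sub_two_div_eq (by positivity), le_div_iff₀ (by linarith), mul_comm]
    exact hχ
  · exact_mod_cast eq_three_of_inv_one_sub_two_div_eq_three h3
end

section
/- Teleportation correctness in hypersphere theories: for the diagonal entangled state φ_x = diag(d_x), effect E_x = 2^{-N} φ_x, any input state ω_a ∈ ℝ^{2^N} and any local effect e_y ∈ ℝ^{2^N}, the joint probability p(x,y) = ∑_{i,j,k} (E_x)_{i,j} (e_y)_k (ω_a)_i (φ_x)_{j,k} equals 2^{-N} (e_y · ω_a). Hence conditioned on Alice's outcome x (which occurs with probability 2^{-N}), Bob's outcome distribution is e_y · ω_a, i.e., the state ω_a is perfectly teleported. -/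
theorem dVec_mul_self (N : ℕ) (μ ν : Fin N → ZMod 2) : dVec N μ ν * dVec N μ ν = 1 := by
  rw [dVec, ← pow_add, ← two_mul, pow_mul, neg_one_sq, one_pow]

theorem Matrix.sum_mul_diagonal_mul_diagonal {ι R : Type*} [Fintype ι] [DecidableEq ι]
    [CommSemiring R] (c : R) (d e w : ι → R) :
    ∑ i, ∑ j, ∑ k, (c * diagonal d i j) * e k * w i * diagonal d j k
      = c * ∑ k, d k * d k * e k * w k := by
  simp only [diagonal_apply, mul_ite, ite_mul, mul_zero, zero_mul, Finset.sum_ite_eq,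
    Finset.mem_univ, if_true, Finset.mul_sum]
  exact Finset.sum_congr rfl fun _ _ => by ring

/-- Teleportation correctness: for the entangled state `φ_x = diag(d_x)`, effect
`E_x = 2^{-N} φ_x`, input state `ω_a` and local effect `e_y`, the joint probability
`p(x,y) = ∑_{i,j,k} (E_x)_{ij} (e_y)_k (ω_a)_i (φ_x)_{jk}` equals `2^{-N}(e_y·ω_a)`;
hence conditioned on Alice's outcome `x` (probability `2^{-N}`), Bob's outcome
distribution is `e_y · ω_a`. -/
theorem stmt19 (N : ℕ) (x : Fin N → ZMod 2)
    (ωa ey : (Fin N → ZMod 2) → ℝ) :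
    (∑ i, ∑ j, ∑ k, (((2 : ℝ) ^ N)⁻¹ * phiMat N x i j) * ey k * ωa i * phiMat N x j k)
      = ((2 : ℝ) ^ N)⁻¹ * ∑ k, ey k * ωa k ∧
    (((2 : ℝ) ^ N)⁻¹)⁻¹ *
      (∑ i, ∑ j, ∑ k, (((2 : ℝ) ^ N)⁻¹ * phiMat N x i j) * ey k * ωa i * phiMat N x j k)
      = ∑ k, ey k * ωa k := by
  have joint : (∑ i, ∑ j, ∑ k, (((2 : ℝ) ^ N)⁻¹ * phiMat N x i j) * ey k * ωa i * phiMat N x j k)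
      = ((2 : ℝ) ^ N)⁻¹ * ∑ k, ey k * ωa k := by
    simp only [phiMat, Matrix.sum_mul_diagonal_mul_diagonal, dVec_mul_self, one_mul]
  refine ⟨joint, ?_⟩
  rw [joint, inv_inv, mul_inv_cancel_left₀ (by positivity)]
end
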